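/- If the asynchronous temporal robustness risk is strictly negative, R(−θ^c(X)) < 0, then for every d ∈ ℕ with d < |R(−θ^c(X))| and all measurable shifts ξ_1,…,ξ_n : Ω → [-d,d] ∩ ℤ, the shifted process satisfies R(−θ^c(X_ξ̄)) < 0. -/
import Mathlib

open scoped Classical

noncomputable section

def shift {α : Type*} (x : ℤ → α) (κ : ℤ) : ℤ → α := fun t => x (t + κ)

def ashift {n : ℕ} (x : ℤ → Fin n → ℝ) (κ : Fin n → ℤ) : ℤ → Fin n → ℝ :=
  fun t i => x (t + κ i) i

def beta {n : ℕ} (c : (Fin n → ℝ) → ℤ → ℝ) (x : ℤ → Fin n → ℝ) : ℤ :=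
  if ∀ t : ℤ, 0 ≤ c (x t) t then 1 else -1

def absE (a : EReal) : EReal := max a (-a)

def eta {n : ℕ} (c : (Fin n → ℝ) → ℤ → ℝ) (x : ℤ → Fin n → ℝ) : EReal :=
  ((beta c x : ℝ) : EReal) * sSup ((fun τ : ℕ => ((τ : ℝ) : EReal)) ''
    {τ : ℕ | ∀ κ : ℤ, |κ| ≤ (τ : ℤ) → beta c (shift x κ) = beta c x})

def theta {n : ℕ} (c : (Fin n → ℝ) → ℤ → ℝ) (x : ℤ → Fin n → ℝ) : EReal :=
  ((beta c x : ℝ) : EReal) * sSup ((fun τ : ℕ => ((τ : ℝ) : EReal)) ''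
    {τ : ℕ | ∀ κ : Fin n → ℤ, (∀ i, |κ i| ≤ (τ : ℤ)) → beta c (ashift x κ) = beta c x})

def Tset {n : ℕ} (c : (Fin n → ℝ) → ℤ → ℝ) (x : ℤ → Fin n → ℝ) : Set ℕ :=
  {τ : ℕ | ∀ κ : Fin n → ℤ, (∀ i, |κ i| ≤ (τ : ℤ)) → beta c (ashift x κ) = beta c x}

lemma theta_eq {n : ℕ} (c : (Fin n → ℝ) → ℤ → ℝ) (x : ℤ → Fin n → ℝ) :
    theta c x = ((beta c x : ℝ) : EReal) * sSup ((fun τ : ℕ => ((τ : ℝ) : EReal)) '' Tset c x) := rfl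

lemma ashift_zero {n : ℕ} (x : ℤ → Fin n → ℝ) : ashift x (fun _ => 0) = x := by
  funext t i; simp [ashift]

lemma ashift_ashift {n : ℕ} (x : ℤ → Fin n → ℝ) (κ₁ κ₂ : Fin n → ℤ) :
    ashift (ashift x κ₁) κ₂ = ashift x (fun i => κ₁ i + κ₂ i) := by
  funext t i
  show x (t + κ₂ i + κ₁ i) i = x (t + (κ₁ i + κ₂ i)) i
  congr 1; ring

lemma zero_mem_Tset {n : ℕ} (c : (Fin n → ℝ) → ℤ → ℝ) (x : ℤ → Fin n → ℝ) :
    0 ∈ Tset c x := by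
  intro κ hκ
  have hk : κ = fun _ => 0 := funext fun i => by
    have := abs_le.mp (hκ i); omega
  rw [hk, ashift_zero]

lemma beta_cases {n : ℕ} (c : (Fin n → ℝ) → ℤ → ℝ) (x : ℤ → Fin n → ℝ) :
    beta c x = 1 ∨ beta c x = -1 := by
  unfold beta; split <;> simp

lemma theta_exists_max {n : ℕ} (c : (Fin n → ℝ) → ℤ → ℝ) (x : ℤ → Fin n → ℝ)
    (h1 : theta c x ≠ ⊤) (h2 : theta c x ≠ ⊥) :
    ∃ N : ℕ, N ∈ Tset c x ∧ (∀ m ∈ Tset c x, m ≤ N) ∧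
      (theta c x).toReal = (beta c x : ℝ) * N := by
  set σ : EReal := sSup ((fun τ : ℕ => ((τ : ℝ) : EReal)) '' Tset c x) with hσ
  have h0mem : ((0:ℝ) : EReal) ∈ (fun τ : ℕ => ((τ : ℝ) : EReal)) '' Tset c x := by
    exact ⟨0, zero_mem_Tset c x, by norm_num⟩
  have hσ0 : ((0:ℝ) : EReal) ≤ σ := le_sSup h0mem
  have hσne_bot : σ ≠ ⊥ := fun h => by simp [h] at hσ0
  have hσne_top : σ ≠ ⊤ := by
    intro htop
    rcases beta_cases c x with hb | hb
    · apply h1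
      rw [theta_eq, hb, ← hσ, htop]
      norm_num
    · apply h2
      rw [theta_eq, hb, ← hσ, htop]
      rw [show (((-1:ℤ):ℝ) : EReal) = ((-1:ℝ):EReal) by norm_num]
      rw [EReal.coe_mul_top_of_neg (by norm_num)]
  obtain ⟨r, hr⟩ : ∃ r : ℝ, σ = (r : EReal) := by
    lift σ to ℝ using ⟨hσne_top, hσne_bot⟩ with r hr
    exact ⟨r, rfl⟩
  have hr0 : (0:ℝ) ≤ r := by
    have := hσ0; rw [hr] at this; exact_mod_cast this
  have hbdd : ∀ m ∈ Tset c x, m ≤ ⌊r⌋₊ := by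
    intro m hm
    have hle : ((m:ℝ) : EReal) ≤ σ := le_sSup ⟨m, hm, rfl⟩
    rw [hr] at hle
    have : (m:ℝ) ≤ r := by exact_mod_cast hle
    exact Nat.le_floor this
  have hbdd' : BddAbove (Tset c x) := ⟨⌊r⌋₊, fun m hm => hbdd m hm⟩
  set N := sSup (Tset c x) with hN
  have hNmem : N ∈ Tset c x := Nat.sSup_mem ⟨0, zero_mem_Tset c x⟩ hbdd'
  have hNle : ∀ m ∈ Tset c x, m ≤ N := fun m hm => le_csSup hbdd' hm
  refine ⟨N, hNmem, hNle, ?_⟩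
  have hσN : σ = ((N:ℝ) : EReal) := by
    apply le_antisymm
    · apply sSup_le
      rintro a ⟨m, hm, rfl⟩
      show ((m:ℝ):EReal) ≤ ((N:ℝ):EReal)
      exact_mod_cast hNle m hm
    · exact le_sSup ⟨N, hNmem, rfl⟩
  rw [theta_eq, ← hσ, hσN, ← EReal.coe_mul, EReal.toReal_coe]

lemma theta_shift_ge {n : ℕ} (c : (Fin n → ℝ) → ℤ → ℝ) (x : ℤ → Fin n → ℝ)
    (κb : Fin n → ℤ) (d : ℕ) (hκ : ∀ i, |κb i| ≤ (d : ℤ))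
    (hx1 : theta c x ≠ ⊤) (hx2 : theta c x ≠ ⊥)
    (hy1 : theta c (ashift x κb) ≠ ⊤) (hy2 : theta c (ashift x κb) ≠ ⊥) :
    (theta c x).toReal - d ≤ (theta c (ashift x κb)).toReal := by
  set y := ashift x κb with hy
  obtain ⟨Nx, hNxmem, hNxmax, hNxval⟩ := theta_exists_max c x hx1 hx2
  obtain ⟨Ny, hNymem, hNymax, hNyval⟩ := theta_exists_max c y hy1 hy2
  rw [hNxval, hNyval]
  -- Claim A: equal betas, push membership from x to y
  have claimA : beta c y = beta c x → ∀ τ ∈ Tset c x, d ≤ τ → (τ - d) ∈ Tset c y := by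
    intro hbe τ hτ hdτ κ hκb
    rw [hy, ashift_ashift]
    rw [hbe]
    apply hτ
    intro i
    have h1 := abs_le.mp (hκb i)
    have h2 := abs_le.mp (hκ i)
    rw [abs_le]
    omega
  -- Claim B: equal betas, push membership from y to x
  have claimB : beta c y = beta c x → ∀ τ ∈ Tset c y, d ≤ τ → (τ - d) ∈ Tset c x := by
    intro hbe τ hτ hdτ κ hκb
    have hx_eq : ashift x κ = ashift y (fun i => κ i - κb i) := by
      rw [hy, ashift_ashift]
      congr 1
      funext i; ring
    rw [hx_eq, ← hbe]
    apply hτ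
    intro i
    have h1 := abs_le.mp (hκb i)
    have h2 := abs_le.mp (hκ i)
    rw [abs_le]
    omega
  -- Claim C: different betas implies Nx + Ny < d
  have claimC : beta c y ≠ beta c x → Nx + Ny < d := by
    intro hne
    by_contra hge
    push_neg at hge
    set κ₁ : Fin n → ℤ := fun i => max (-(Ny:ℤ)) (min (Ny:ℤ) (-κb i)) with hκ₁
    have hκ₁b : ∀ i, |κ₁ i| ≤ (Ny : ℤ) := by
      intro i; rw [abs_le]; simp only [hκ₁]; omega
    have hκ₂b : ∀ i, |κb i + κ₁ i| ≤ (Nx : ℤ) := by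
      intro i
      have h1 := abs_le.mp (hκ i)
      have hd' : (d : ℤ) ≤ (Nx : ℤ) + Ny := by exact_mod_cast hge
      rw [abs_le]
      simp only [hκ₁]
      omega
    have e1 : beta c (ashift y κ₁) = beta c y := hNymem κ₁ hκ₁b
    have e2 : beta c (ashift y κ₁) = beta c x := by
      rw [hy, ashift_ashift]
      exact hNxmem _ hκ₂b
    exact hne (e1 ▸ e2)
  rcases eq_or_ne (beta c y) (beta c x) with hbe | hbe
  · rw [hbe]
    rcases beta_cases c x with hb | hb <;> rw [hb]
    · -- beta = 1
      push_cast
      rcases le_or_gt Nx d with h | h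
      · have : (0:ℝ) ≤ Ny := Nat.cast_nonneg _
        have : (Nx:ℝ) ≤ d := by exact_mod_cast h
        linarith [Nat.cast_nonneg (α := ℝ) Ny]
      · have hmem := claimA hbe Nx hNxmem h.le
        have hle := hNymax _ hmem
        have : (Nx:ℝ) - d ≤ Ny := by
          have : Nx - d ≤ Ny := hle
          have h2 : Nx ≤ Ny + d := by omega
          have := (Nat.cast_le (α := ℝ)).mpr h2
          push_cast at this
          linarith
        linarith
    · -- beta = -1
      push_cast
      rcases le_or_gt Ny d with h | h
      · have h1 : (Ny:ℝ) ≤ d := by exact_mod_cast h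
        linarith [Nat.cast_nonneg (α := ℝ) Nx]
      · have hmem := claimB hbe Ny hNymem h.le
        have hle := hNxmax _ hmem
        have h2 : Ny ≤ Nx + d := by omega
        have := (Nat.cast_le (α := ℝ)).mpr h2
        push_cast at this
        linarith
  · have hC := claimC hbe
    have hC' : (Nx:ℝ) + Ny ≤ d := by
      have : Nx + Ny ≤ d := hC.le
      exact_mod_cast this
    rcases beta_cases c x with hbx | hbx <;> rcases beta_cases c y with hby | hby
    · exact absurd (hby.trans hbx.symm) hbe
    · rw [hbx, hby]; push_cast; linarith
    · rw [hbx, hby]; push_cast; linarith [Nat.cast_nonneg (α := ℝ) Nx, Nat.cast_nonneg (α := ℝ) Ny]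
    · exact absurd (hby.trans hbx.symm) hbe

/-- If R(−θ^c(X)) < 0 then for every d < |R(−θ^c(X))| and all shifts bounded by d,
R(−θ^c(X_ξ̄)) < 0. -/
theorem stmt11 {n : ℕ} {Ω : Type*} [MeasurableSpace Ω]
    (X : ℤ → Ω → Fin n → ℝ) (c : (Fin n → ℝ) → ℤ → ℝ)
    (R : (Ω → ℝ) → ℝ)
    (hMono : ∀ Z Z' : Ω → ℝ, (∀ ω, Z ω ≤ Z' ω) → R Z ≤ R Z')
    (hTrans : ∀ (Z : Ω → ℝ) (a : ℝ), R (fun ω => Z ω + a) = R Z + a)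
    (hfin : ∀ ω, theta c (fun t => X t ω) ≠ ⊤ ∧ theta c (fun t => X t ω) ≠ ⊥)
    (hneg : R (fun ω => -(theta c (fun t => X t ω)).toReal) < 0)
    (d : ℕ) (hd : (d : ℝ) < |R (fun ω => -(theta c (fun t => X t ω)).toReal)|)
    (ξ : Fin n → Ω → ℤ) (hξmeas : ∀ i, Measurable (ξ i))
    (hξ : ∀ i ω, |ξ i ω| ≤ (d : ℤ))
    (hfinξ : ∀ ω, theta c (fun t i => X (t + ξ i ω) ω i) ≠ ⊤ ∧
      theta c (fun t i => X (t + ξ i ω) ω i) ≠ ⊥) :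
    R (fun ω => -(theta c (fun t i => X (t + ξ i ω) ω i)).toReal) < 0 := by
  have key : ∀ ω, -(theta c (fun t i => X (t + ξ i ω) ω i)).toReal ≤
      -(theta c (fun t => X t ω)).toReal + d := by
    intro ω
    have h := theta_shift_ge c (fun t => X t ω) (fun i => ξ i ω) d (fun i => hξ i ω)
      (hfin ω).1 (hfin ω).2 (hfinξ ω).1 (hfinξ ω).2
    have he : ashift (fun t => X t ω) (fun i => ξ i ω) = fun t i => X (t + ξ i ω) ω i := rfl
    rw [he] at h
    linarith
  have h1 := hMono _ _ key
  rw [hTrans] at h1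
  have habs := abs_of_neg hneg
  linarith
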